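/- For any digit a₀ ∈ {0,…,9} and any real θ, |Σ_{0≤n<10, n≠a₀} e(nθ)| ≤ 7 + 2·exp(−‖θ‖²) ≤ 9·exp(−‖θ‖²/10), where ‖θ‖ is the distance from θ to the nearest integer. -/

import Mathlib

/-- `e(x) = exp(2πix)`. -/
noncomputable def e (x : ℝ) : ℂ := Complex.exp (2 * Real.pi * Complex.I * x)

/-- Distance from a real number to the nearest integer. -/
noncomputable def nint (θ : ℝ) : ℝ := ⨅ m : ℤ, |θ - (m : ℝ)|

/-!
Removing one digit from `0, …, 9` always leaves two consecutive digits `p, p + 1`, and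
`|e(pθ) + e((p + 1)θ)| = |1 + e(θ)| = 2 |cos πθ|`. Shifting `θ` by the nearest integer,
`|cos πθ| = cos π‖θ‖ ≤ 1 - 2‖θ‖² ≤ exp(-‖θ‖²)`, while each of the seven remaining terms has
modulus `1`. The second inequality is elementary calculus for `‖θ‖² ≤ 1/4`.
-/

open Real Finset

lemma nint_nonneg (θ : ℝ) : 0 ≤ nint θ :=
  le_ciInf fun _ => abs_nonneg _

lemma nint_le_abs_sub_intCast (θ : ℝ) (m : ℤ) : nint θ ≤ |θ - m| :=
  ciInf_le ⟨0, by rintro _ ⟨n, rfl⟩; exact abs_nonneg _⟩ m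

lemma nint_le_half (θ : ℝ) : nint θ ≤ 1 / 2 :=
  (nint_le_abs_sub_intCast θ (round θ)).trans (abs_sub_round θ)

lemma cos_pi_mul_le_exp_neg_sq {t : ℝ} (ht : |t| ≤ 1) : cos (π * t) ≤ exp (-t ^ 2) := by
  have hcos : cos (π * t) ≤ 1 - 2 * t ^ 2 := by
    have h := cos_le_one_sub_mul_cos_sq (x := π * t) (by
      rw [abs_mul, abs_of_pos pi_pos]; exact mul_le_of_le_one_right pi_pos.le ht)
    rwa [mul_pow, ← mul_assoc, div_mul_cancel₀ _ (pow_ne_zero 2 pi_ne_zero)] at h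
  linarith [add_one_le_exp (-t ^ 2), sq_nonneg t]

lemma abs_cos_pi_mul_le_exp_neg_nint_sq (θ : ℝ) : |cos (π * θ)| ≤ exp (-nint θ ^ 2) := by
  set u := θ - round θ
  have hu : |u| ≤ 1 / 2 := abs_sub_round θ
  have hcos : |cos (π * θ)| = cos (π * u) := by
    rw [show π * θ = π * u + round θ * π by ring, cos_add_int_mul_pi, abs_mul, abs_neg_one_zpow,
      one_mul, abs_of_nonneg]
    obtain ⟨hu₁, hu₂⟩ := abs_le.1 hu
    exact cos_nonneg_of_mem_Icc ⟨by nlinarith [pi_pos], by nlinarith [pi_pos]⟩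
  have hnint : nint θ ^ 2 ≤ u ^ 2 := by
    rw [← sq_abs u]
    exact pow_le_pow_left₀ (nint_nonneg θ) (nint_le_abs_sub_intCast θ (round θ)) 2
  rw [hcos]
  exact (cos_pi_mul_le_exp_neg_sq (by linarith)).trans (exp_le_exp.2 (by linarith))

lemma e_add (x y : ℝ) : e (x + y) = e x * e y := by
  simp only [e, Complex.ofReal_add, mul_add, Complex.exp_add]

lemma norm_e (x : ℝ) : ‖e x‖ = 1 := by
  rw [e, show 2 * π * Complex.I * x = ((2 * π * x : ℝ) : ℂ) * Complex.I by push_cast; ring]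
  exact Complex.norm_exp_ofReal_mul_I _

lemma norm_one_add_e (θ : ℝ) : ‖1 + e θ‖ = 2 * |cos (π * θ)| := by
  have h : 1 + e θ = Complex.exp ((π * θ : ℝ) * Complex.I) * (2 * Complex.cos (π * θ : ℝ)) := by
    rw [Complex.two_cos, mul_add, ← Complex.exp_add, ← Complex.exp_add, neg_mul, add_neg_cancel,
      Complex.exp_zero, add_comm, e]
    congr 2
    push_cast
    ring
  rw [h, norm_mul, Complex.norm_exp_ofReal_mul_I, one_mul, norm_mul, ← Complex.ofReal_cos,
    Complex.norm_real, Real.norm_eq_abs, Complex.norm_two]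

lemma norm_e_add_e_add (x θ : ℝ) : ‖e x + e (x + θ)‖ = ‖1 + e θ‖ := by
  rw [e_add, ← mul_one_add, norm_mul, norm_e, one_mul]

lemma norm_sum_e_le_of_mem_of_succ_mem {S : Finset ℕ} {p : ℕ} (hp : p ∈ S) (hp' : p + 1 ∈ S)
    (θ : ℝ) : ‖∑ n ∈ S, e (n * θ)‖ ≤ (#S - 2 : ℝ) + ‖1 + e θ‖ := by
  have hp'S : p + 1 ∈ S.erase p := mem_erase.2 ⟨by omega, hp'⟩
  set R := (S.erase p).erase (p + 1)
  rw [← add_sum_erase S _ hp, ← add_sum_erase _ _ hp'S, ← add_assoc]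
  calc ‖e (p * θ) + e ((p + 1 : ℕ) * θ) + ∑ n ∈ R, e (n * θ)‖
      ≤ ‖e (p * θ) + e ((p + 1 : ℕ) * θ)‖ + ‖∑ n ∈ R, e (n * θ)‖ := norm_add_le _ _
    _ ≤ ‖1 + e θ‖ + ∑ n ∈ R, ‖e (n * θ)‖ := by
        rw [Nat.cast_succ, add_mul, one_mul, norm_e_add_e_add]
        gcongr
        exact norm_sum_le _ _
    _ = (#S - 2 : ℝ) + ‖1 + e θ‖ := by
        simp only [R, norm_e, sum_const, nsmul_eq_mul, mul_one, cast_card_erase_of_mem hp,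
          cast_card_erase_of_mem hp'S]
        ring

lemma seven_add_two_mul_exp_neg_le {s : ℝ} (hs₀ : 0 ≤ s) (hs₁ : s ≤ 1) :
    7 + 2 * exp (-s) ≤ 9 * exp (-s / 10) := by
  have hexp : exp (-s) ≤ 1 - 9 * s / 20 := by
    have hpos : 0 < 1 + s := by linarith
    calc exp (-s) = (exp s)⁻¹ := exp_neg s
      _ ≤ (1 + s)⁻¹ := inv_anti₀ hpos (by linarith [add_one_le_exp s])
      _ ≤ 1 - 9 * s / 20 := by
        rw [inv_le_iff_one_le_mul₀' hpos]; nlinarith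
  -- `7 + 2 (1 - 9s/20) = 9 (1 - s/10)`
  linarith [add_one_le_exp (-s / 10)]

theorem stmt_3 (a₀ : ℕ) (ha : a₀ ≤ 9) (θ : ℝ) :
    ‖∑ n ∈ (Finset.range 10).filter (fun n => n ≠ a₀), e ((n : ℝ) * θ)‖
      ≤ 7 + 2 * Real.exp (-(nint θ)^2) ∧
    7 + 2 * Real.exp (-(nint θ)^2) ≤ 9 * Real.exp (-(nint θ)^2 / 10) := by
  rw [filter_ne']
  have hcard : (#((range 10).erase a₀) : ℝ) = 9 := by
    rw [cast_card_erase_of_mem (mem_range.2 (by omega)), card_range]; norm_num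
  obtain ⟨p, hp, hp'⟩ : ∃ p, p ∈ (range 10).erase a₀ ∧ p + 1 ∈ (range 10).erase a₀ := by
    by_cases h : a₀ ≤ 4
    · exact ⟨8, by simp; omega, by simp; omega⟩
    · exact ⟨0, by simp; omega, by simp; omega⟩
  refine ⟨?_, seven_add_two_mul_exp_neg_le (sq_nonneg _) ?_⟩
  · calc _ ≤ (9 - 2 : ℝ) + 2 * |cos (π * θ)| := by
          rw [← hcard, ← norm_one_add_e]; exact norm_sum_e_le_of_mem_of_succ_mem hp hp' θ
      _ ≤ 7 + 2 * exp (-nint θ ^ 2) := by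
          linarith [abs_cos_pi_mul_le_exp_neg_nint_sq θ]
  · nlinarith [nint_nonneg θ, nint_le_half θ]
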